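/- arXiv:1710.10959 — 2 statements merged into one kernel-verified Lean document; each statement's English description precedes it below -/
import Mathlib

section
/- If γ : [0,1] → ℝⁿ is a piecewise C¹ curve in Minkowski space whose derivative is almost everywhere future-directed timelike, and f : ℝⁿ → ℝ is C¹ with everywhere past-directed timelike gradient satisfying g(∇f,∇f) ≤ −1, then f(γ(1)) − f(γ(0)) ≥ ∫₀¹ √(−g(γ'(t),γ'(t))) dt, i.e., f grows at least by the Lorentzian length of the curve. -/
/-- The Minkowski bilinear form of signature `(-,+,...,+)` on `Fin n → ℝ`. -/
def mink {n : ℕ} (v w : Fin n → ℝ) : ℝ :=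
  ∑ i : Fin n, (if i.val = 0 then (-1 : ℝ) else 1) * v i * w i

/-- The partial derivative `∂ᵢ f` at `x`. -/
noncomputable def pd {n : ℕ} (f : (Fin n → ℝ) → ℝ) (i : Fin n) (x : Fin n → ℝ) : ℝ :=
  fderiv ℝ f x (Pi.single i 1)

/-- The Lorentzian (Minkowski) gradient `∇f = (−∂₀f, ∂₁f, …, ∂_{n−1}f)`. -/
noncomputable def mgrad {n : ℕ} (f : (Fin n → ℝ) → ℝ) (x : Fin n → ℝ) : Fin n → ℝ :=
  fun i => (if i.val = 0 then (-1 : ℝ) else 1) * pd f i x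

/-!
Along each `C¹` piece, `(f ∘ γ)' = df(γ') = g(∇f, γ')`. Since `∇f` is past-directed with
`-g(∇f, ∇f) ≥ 1` and `γ'` is future-directed timelike, the reverse Cauchy–Schwarz inequality
`√(-g(u,u)) √(-g(v,v)) ≤ g(u,v)` bounds this rate below by `√(-g(γ',γ'))`. Integrating, with the
fundamental theorem of calculus applied off the finitely many break points, gives the claim.
-/

open MeasureTheory Set

theorem Fin.exists_mem_Ioo_of_notMem_range {α : Type*} [LinearOrder α] {k : ℕ}
    {t : Fin (k + 1) → α} (ht : Monotone t) {x : α} (hx : x ∈ Ioo (t 0) (t (Fin.last k)))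
    (hxt : x ∉ range t) : ∃ i : Fin k, x ∈ Ioo (t i.castSucc) (t i.succ) := by
  induction k with
  | zero => exact absurd (hx.1.trans hx.2) (lt_irrefl _)
  | succ k ih =>
    by_cases hlt : x < t (Fin.last k).castSucc
    · obtain ⟨i, hi⟩ := ih (ht.comp Fin.strictMono_castSucc.monotone) ⟨hx.1, hlt⟩
        fun ⟨j, hj⟩ => hxt ⟨j.castSucc, hj⟩
      exact ⟨i.castSucc, hi⟩
    · exact ⟨Fin.last k, lt_of_le_of_ne (not_lt.1 hlt) fun h => hxt ⟨_, h⟩, hx.2⟩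

theorem integral_eq_sub_of_hasDerivAt_of_partition {E : Type*} [NormedAddCommGroup E]
    [NormedSpace ℝ E] [CompleteSpace E] {F F' : ℝ → E} {k : ℕ} {t : Fin (k + 1) → ℝ}
    (ht : Monotone t) (hF : ContinuousOn F (Icc (t 0) (t (Fin.last k))))
    (hderiv : ∀ i : Fin k, ∀ s ∈ Ioo (t i.castSucc) (t i.succ), HasDerivAt F (F' s) s)
    (hint : IntervalIntegrable F' volume (t 0) (t (Fin.last k))) :
    ∫ s in t 0..t (Fin.last k), F' s = F (t (Fin.last k)) - F (t 0) := by
  refine integral_eq_of_hasDerivAt_off_countable_of_le F F' (ht (Fin.zero_le _))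
    (finite_range t).countable hF (fun s hs => ?_) hint
  obtain ⟨i, hi⟩ := Fin.exists_mem_Ioo_of_notMem_range ht hs.1 hs.2
  exact hderiv i s hi

theorem mink_self {n : ℕ} (v : Fin (n + 1) → ℝ) :
    mink v v = -v 0 ^ 2 + ∑ i : Fin n, v i.succ ^ 2 := by
  simp [mink, Fin.sum_univ_succ, sq]

theorem mink_eq_neg_mul_add_sum {n : ℕ} (v w : Fin (n + 1) → ℝ) :
    mink v w = -(v 0 * w 0) + ∑ i : Fin n, v i.succ * w i.succ := by
  simp [mink, Fin.sum_univ_succ]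

theorem sqrt_sq_sub_sq_mul_sqrt_sq_sub_sq_le {a b c d : ℝ} (hb : 0 ≤ b) (hba : b ≤ a)
    (hd : 0 ≤ d) (hdc : d ≤ c) : √(a ^ 2 - b ^ 2) * √(c ^ 2 - d ^ 2) ≤ a * c - b * d := by
  have hbd : b * d ≤ a * c := mul_le_mul hba hdc hd (hb.trans hba)
  rw [← Real.sqrt_mul (by nlinarith), Real.sqrt_le_iff]
  -- `(ac - bd)² - (a² - b²)(c² - d²) = (ad - bc)²`
  exact ⟨by linarith, by nlinarith [sq_nonneg (a * d - b * c)]⟩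

theorem sqrt_sum_sq_succ_le_abs {n : ℕ} (v : Fin (n + 1) → ℝ) (hv : mink v v ≤ 0) :
    √(∑ i : Fin n, v i.succ ^ 2) ≤ |v 0| := by
  rw [← Real.sqrt_sq_eq_abs]
  exact Real.sqrt_le_sqrt (by linarith [mink_self v])

/-- Reverse Cauchy–Schwarz inequality for causal vectors in opposite time cones. -/
theorem sqrt_neg_mink_mul_sqrt_neg_mink_le {n : ℕ} {u v : Fin (n + 1) → ℝ}
    (hu : mink u u ≤ 0) (hu0 : u 0 ≤ 0) (hv : mink v v ≤ 0) (hv0 : 0 ≤ v 0) :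
    √(-mink u u) * √(-mink v v) ≤ mink u v := by
  set b := √(∑ i : Fin n, u i.succ ^ 2)
  set d := √(∑ i : Fin n, v i.succ ^ 2)
  have hb : b ^ 2 = ∑ i : Fin n, u i.succ ^ 2 := Real.sq_sqrt (by positivity)
  have hd : d ^ 2 = ∑ i : Fin n, v i.succ ^ 2 := Real.sq_sqrt (by positivity)
  have hba : b ≤ -u 0 := (sqrt_sum_sq_succ_le_abs u hu).trans_eq (abs_of_nonpos hu0)
  have hdc : d ≤ v 0 := (sqrt_sum_sq_succ_le_abs v hv).trans_eq (abs_of_nonneg hv0)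
  have hCS : ∑ i : Fin n, -u i.succ * v i.succ ≤ b * d := by
    simpa only [neg_sq] using
      Real.sum_mul_le_sqrt_mul_sqrt Finset.univ (fun i : Fin n => -u i.succ) fun i => v i.succ
  calc √(-mink u u) * √(-mink v v) = √((-u 0) ^ 2 - b ^ 2) * √(v 0 ^ 2 - d ^ 2) := by
        rw [mink_self, mink_self, hb, hd, neg_sq]; ring_nf
    _ ≤ -u 0 * v 0 - b * d :=
        sqrt_sq_sub_sq_mul_sqrt_sq_sub_sq_le (Real.sqrt_nonneg _) hba (Real.sqrt_nonneg _) hdc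
    _ ≤ mink u v := by
        simp only [Finset.sum_neg_distrib, neg_mul] at hCS
        rw [mink_eq_neg_mul_add_sum]; linarith

theorem sqrt_neg_mink_le_mink {n : ℕ} {u v : Fin (n + 1) → ℝ} (hu : mink u u ≤ -1)
    (hu0 : u 0 ≤ 0) (hv : mink v v ≤ 0) (hv0 : 0 ≤ v 0) : √(-mink v v) ≤ mink u v :=
  (le_mul_of_one_le_left (Real.sqrt_nonneg _) (Real.one_le_sqrt.2 (by linarith))).trans
    (sqrt_neg_mink_mul_sqrt_neg_mink_le (hu.trans (by norm_num)) hu0 hv hv0)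

theorem mink_mgrad {n : ℕ} (f : (Fin n → ℝ) → ℝ) (x v : Fin n → ℝ) :
    mink (mgrad f x) v = fderiv ℝ f x v := by
  conv_rhs => rw [pi_eq_sum_univ' v, map_sum]
  refine Finset.sum_congr rfl fun i _ => ?_
  simp only [mgrad, pd, map_smul, smul_eq_mul]
  split_ifs <;> ring

theorem ContDiff.continuous_mgrad {n : ℕ} {f : (Fin n → ℝ) → ℝ} (hf : ContDiff ℝ 1 f) :
    Continuous (mgrad f) :=
  continuous_pi fun _ =>
    continuous_const.mul ((hf.continuous_fderiv one_ne_zero).clm_apply continuous_const)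

theorem IntervalIntegrable.mink_of_continuousOn {n : ℕ} {u v : ℝ → Fin n → ℝ} {a b : ℝ}
    (hu : ContinuousOn u (uIcc a b)) (hv : IntervalIntegrable v volume a b) :
    IntervalIntegrable (fun s => mink (u s) (v s)) volume a b := by
  have hterm : ∀ i ∈ Finset.univ, IntervalIntegrable
      (fun s => (if i.val = 0 then (-1 : ℝ) else 1) * u s i * v s i) volume a b := fun i _ =>
    IntervalIntegrable.continuousOn_mul ⟨hv.1.eval i, hv.2.eval i⟩
      (continuousOn_const.mul ((continuous_apply i).comp_continuousOn hu))
  have hsum := IntervalIntegrable.sum Finset.univ hterm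
  rw [Finset.sum_fn] at hsum
  exact hsum

open MeasureTheory in
/-- If `γ` is a piecewise `C¹` curve in Minkowski space whose derivative is a.e.
future-directed timelike, and `f` is `C¹` with everywhere past-directed timelike
gradient satisfying `g(∇f,∇f) ≤ −1` (steep), then `f` grows along `γ` at least by
the Lorentzian length of `γ`. -/
theorem stmt2 (n : ℕ) (γ γ' : ℝ → (Fin (n + 1) → ℝ))
    (hcont : ContinuousOn γ (Set.Icc 0 1))
    -- `γ` is piecewise `C¹` on `[0,1]` with derivative `γ'` on each piece
    (hpw : ∃ (k : ℕ) (t : Fin (k + 1) → ℝ), StrictMono t ∧ t 0 = 0 ∧ t (Fin.last k) = 1 ∧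
      ∀ i : Fin k, (∀ s ∈ Set.Ioo (t i.castSucc) (t i.succ), HasDerivAt γ (γ' s) s) ∧
        ContinuousOn γ' (Set.Icc (t i.castSucc) (t i.succ)))
    (hint : IntervalIntegrable γ' volume 0 1)
    -- the derivative is a.e. future-directed timelike
    (htl : ∀ᵐ s ∂(volume.restrict (Set.Icc (0 : ℝ) 1)),
      mink (γ' s) (γ' s) < 0 ∧ 0 < γ' s 0)
    (f : (Fin (n + 1) → ℝ) → ℝ) (hf : ContDiff ℝ 1 f)
    -- `f` is steep: `g(∇f,∇f) ≤ −1` with past-directed (timelike) gradient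
    (hsteep : ∀ x, mink (mgrad f x) (mgrad f x) ≤ -1)
    (hpast : ∀ x, mgrad f x 0 < 0) :
    (∫ s in (0 : ℝ)..1, Real.sqrt (-(mink (γ' s) (γ' s)))) ≤ f (γ 1) - f (γ 0) := by
  obtain ⟨k, t, ht, ht0, ht1, hpiece⟩ := hpw
  have hrate : IntervalIntegrable (fun s => mink (mgrad f (γ s)) (γ' s)) volume 0 1 :=
    hint.mink_of_continuousOn
      (hf.continuous_mgrad.comp_continuousOn (by rwa [uIcc_of_le zero_le_one]))
  have hFTC : ∫ s in (0 : ℝ)..1, mink (mgrad f (γ s)) (γ' s) = f (γ 1) - f (γ 0) := by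
    rw [← ht0, ← ht1] at hcont hrate ⊢
    refine integral_eq_sub_of_hasDerivAt_of_partition ht.monotone
      (hf.continuous.comp_continuousOn hcont) (fun i s hs => ?_) hrate
    rw [mink_mgrad]
    exact (hf.differentiable one_ne_zero (γ s)).hasFDerivAt.comp_hasDerivAt s ((hpiece i).1 s hs)
  rw [← hFTC, intervalIntegral.integral_of_le zero_le_one,
    intervalIntegral.integral_of_le zero_le_one]
  -- no integrability of the length integrand is needed: it lies between `0` and the rate
  refine integral_mono_of_nonneg (ae_of_all _ fun _ => Real.sqrt_nonneg _) hrate.1 ?_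
  filter_upwards [ae_restrict_of_ae_restrict_of_subset Ioc_subset_Icc_self htl] with s hs
  exact sqrt_neg_mink_le_mink (hsteep _) (hpast _).le hs.1.le hs.2.le
end

section
/- In Minkowski space ℝⁿ, for points p, q with q − p future-directed causal, the Lorentzian distance d(p,q) = √(−g(q−p, q−p)) equals the infimum over steep C¹ functions f of [f(q) − f(p)]⁺. In particular the infimum is attained (up to ε) by functions of the form f(x) = −g(v, x)/√(−g(v,v)) for suitable future-directed timelike vectors v. -/
/-!
For a steep `f`, `-∇f` is future-directed with `-g(∇f, ∇f) ≥ 1`, so by the reverse Cauchy–Schwarz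
inequality `df(q - p) = g(∇f, q - p) ≥ d(p, q)` at every point; the mean value theorem on the
segment `[p, q]` gives `f q - f p ≥ d(p, q)`. Conversely, for future-directed timelike `v` the
linear function `f_v` is steep and `f_v q - f_v p = -g(v, q - p) / √(-g(v, v))`; tilting `q - p`
slightly into the future makes this at most `d(p, q) + ε`.
-/

open Finset

section

variable {n : ℕ}

def IsSteep (f : (Fin (n + 1) → ℝ) → ℝ) : Prop :=
  ∀ x, mink (mgrad f x) (mgrad f x) ≤ -1 ∧ mgrad f x 0 < 0

noncomputable def linearTimeFunction (v x : Fin n → ℝ) : ℝ :=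
  -(mink v x) / √(-(mink v v))

lemma mink_comm (v w : Fin n → ℝ) : mink v w = mink w v :=
  sum_congr rfl fun _ _ => by ring

lemma mink_neg_right (v w : Fin n → ℝ) : mink v (-w) = -mink v w := by
  simp only [mink, Pi.neg_apply, mul_neg, sum_neg_distrib]

lemma mink_neg_left (v w : Fin n → ℝ) : mink (-v) w = -mink v w := by
  rw [mink_comm, mink_neg_right, mink_comm]

lemma mink_sub_right (v x y : Fin n → ℝ) : mink v (x - y) = mink v x - mink v y := by
  simp only [mink, Pi.sub_apply, mul_sub, sum_sub_distrib]

lemma mink_eq_neg_time_add_space (v w : Fin (n + 1) → ℝ) :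
    mink v w = -(v 0 * w 0) + ∑ i : Fin n, v i.succ * w i.succ := by
  simp [mink, Fin.sum_univ_succ]

lemma mink_self_eq (v : Fin (n + 1) → ℝ) :
    mink v v = -v 0 ^ 2 + ∑ i : Fin n, v i.succ ^ 2 := by
  simp only [mink_eq_neg_time_add_space, sq]

theorem mink_reverse_cauchy_schwarz {u w : Fin (n + 1) → ℝ} (hu : mink u u ≤ 0) (hu0 : 0 ≤ u 0)
    (hw : mink w w ≤ 0) (hw0 : 0 ≤ w 0) :
    √(-mink u u) * √(-mink w w) ≤ -mink u w := by
  rw [mink_self_eq] at hu hw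
  rw [mink_self_eq, mink_self_eq, mink_eq_neg_time_add_space]
  set a := u 0
  set b := w 0
  set A := ∑ i : Fin n, u i.succ ^ 2
  set B := ∑ i : Fin n, w i.succ ^ 2
  have hcs := Real.sum_mul_le_sqrt_mul_sqrt univ (fun i : Fin n => u i.succ)
    (fun i => w i.succ)
  have hA : √A ^ 2 = A := Real.sq_sqrt (sum_nonneg fun _ _ => sq_nonneg _)
  have hB : √B ^ 2 = B := Real.sq_sqrt (sum_nonneg fun _ _ => sq_nonneg _)
  have hAa : √A ≤ a := Real.sqrt_le_left hu0 |>.mpr (by linarith)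
  have hBb : √B ≤ b := Real.sqrt_le_left hw0 |>.mpr (by linarith)
  -- `(ab - √A√B)² - (a² - A)(b² - B) = (a√B - b√A)²`
  calc √(-(-a ^ 2 + A)) * √(-(-b ^ 2 + B)) = √((a ^ 2 - A) * (b ^ 2 - B)) := by
        rw [← Real.sqrt_mul (by linarith)]; ring_nf
    _ ≤ a * b - √A * √B := by
        refine Real.sqrt_le_left ?_ |>.mpr ?_
        · nlinarith [Real.sqrt_nonneg A, Real.sqrt_nonneg B]
        · nlinarith [sq_nonneg (a * √B - b * √A)]
    _ ≤ -(-(a * b) + ∑ i : Fin n, u i.succ * w i.succ) := by linarith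

lemma fderiv_apply_eq_mink_mgrad (f : (Fin n → ℝ) → ℝ) (x u : Fin n → ℝ) :
    fderiv ℝ f x u = mink (mgrad f x) u := by
  conv_lhs => rw [← univ_sum_single u]
  refine (map_sum _ _ _).trans (sum_congr rfl fun i _ => ?_)
  have hsingle : Pi.single i (u i) = u i • (Pi.single i 1 : Fin n → ℝ) := by
    rw [← Pi.single_smul, smul_eq_mul, mul_one]
  rw [mgrad, pd, hsingle, map_smul, smul_eq_mul]
  split_ifs <;> ring

lemma IsSteep.sqrt_neg_mink_le_fderiv {f : (Fin (n + 1) → ℝ) → ℝ} (hf : IsSteep f)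
    (x : Fin (n + 1) → ℝ) {u : Fin (n + 1) → ℝ} (hu : mink u u ≤ 0) (hu0 : 0 ≤ u 0) :
    √(-mink u u) ≤ fderiv ℝ f x u := by
  obtain ⟨hgrad, hgrad0⟩ := hf x
  have hw : mink (-mgrad f x) (-mgrad f x) ≤ -1 := by
    rwa [mink_neg_left, mink_neg_right, neg_neg]
  have hrcs := mink_reverse_cauchy_schwarz hu hu0 (hw.trans (by norm_num))
    (by simp only [Pi.neg_apply]; linarith)
  have hone : 1 ≤ √(-mink (-mgrad f x) (-mgrad f x)) := Real.one_le_sqrt.mpr (by linarith)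
  have hflip : -mink u (-mgrad f x) = mink (mgrad f x) u := by
    rw [mink_neg_right, neg_neg, mink_comm]
  rw [fderiv_apply_eq_mink_mgrad, ← hflip]
  nlinarith [Real.sqrt_nonneg (-mink u u)]

lemma IsSteep.sqrt_neg_mink_le_sub {f : (Fin (n + 1) → ℝ) → ℝ} (hf : IsSteep f)
    (hd : Differentiable ℝ f) {p q : Fin (n + 1) → ℝ} (hc : mink (q - p) (q - p) ≤ 0)
    (hfd : 0 ≤ (q - p) 0) :
    √(-mink (q - p) (q - p)) ≤ f q - f p := by
  have hline : ∀ t : ℝ, HasDerivAt (fun s : ℝ => p + s • (q - p)) (q - p) t := fun t => by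
    simpa using ((hasDerivAt_id t).smul_const (q - p)).const_add p
  obtain ⟨c, -, hslope⟩ := exists_hasDerivAt_eq_slope (fun t => f (p + t • (q - p)))
    (fun t => fderiv ℝ f (p + t • (q - p)) (q - p)) zero_lt_one
    (hd.continuous.comp_continuousOn fun t _ => (hline t).continuousAt.continuousWithinAt)
    fun t _ => (hd _).hasFDerivAt.comp_hasDerivAt t (hline t)
  simpa [hslope] using hf.sqrt_neg_mink_le_fderiv (p + c • (q - p)) hc hfd

lemma linearTimeFunction_eq_clm (v : Fin n → ℝ) :
    linearTimeFunction v = ⇑(∑ i, (-((if i.val = 0 then (-1 : ℝ) else 1) * v i) /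
      √(-(mink v v))) • ContinuousLinearMap.proj (R := ℝ) (φ := fun _ : Fin n => ℝ) i) := by
  ext x
  rw [linearTimeFunction]
  -- hides the `mink` under the square root from the unfolding below
  set N := √(-(mink v v))
  simp only [mink, ← sum_neg_distrib, sum_div, _root_.sum_apply, smul_apply,
    ContinuousLinearMap.proj_apply, smul_eq_mul]
  exact sum_congr rfl fun _ _ => by ring

lemma contDiff_linearTimeFunction {k : WithTop ℕ∞} (v : Fin n → ℝ) :
    ContDiff ℝ k (linearTimeFunction v) := by
  rw [linearTimeFunction_eq_clm]
  exact ContinuousLinearMap.contDiff _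

lemma mgrad_linearTimeFunction (v x : Fin n → ℝ) :
    mgrad (linearTimeFunction v) x = fun i => -v i / √(-(mink v v)) := by
  ext i
  rw [mgrad, pd, linearTimeFunction_eq_clm, ContinuousLinearMap.fderiv]
  simp only [_root_.sum_apply, smul_apply, ContinuousLinearMap.proj_apply, Pi.single_apply,
    smul_eq_mul, mul_ite, mul_one, mul_zero, sum_ite_eq', mem_univ, ↓reduceIte]
  split_ifs <;> ring

lemma isSteep_linearTimeFunction {v : Fin (n + 1) → ℝ} (hv : mink v v < 0) (hv0 : 0 < v 0) :
    IsSteep (linearTimeFunction v) := by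
  intro x
  have hN : 0 < √(-(mink v v)) := Real.sqrt_pos.mpr (by linarith)
  have hN2 : √(-(mink v v)) ^ 2 = -(mink v v) := Real.sq_sqrt (by linarith)
  rw [mgrad_linearTimeFunction]
  refine ⟨?_, div_neg_of_neg_of_pos (by linarith) hN⟩
  have hscale : mink (fun i => -v i / √(-(mink v v))) (fun i => -v i / √(-(mink v v))) =
      mink v v / √(-(mink v v)) ^ 2 := by
    simp only [mink, sum_div]
    exact sum_congr rfl fun _ _ => by ring
  rw [hscale, hN2, div_neg, div_self hv.ne]

lemma linearTimeFunction_sub (v p q : Fin n → ℝ) :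
    linearTimeFunction v q - linearTimeFunction v p = -mink v (q - p) / √(-(mink v v)) := by
  rw [linearTimeFunction, linearTimeFunction, mink_sub_right]
  ring

-- `v` is `q - p` with its time component raised from `u₀` to `√(u₀² + ε²)`, so `-g(v,v) = d² + ε²`.
lemma exists_linearTimeFunction_sub_le {p q : Fin (n + 1) → ℝ} (hc : mink (q - p) (q - p) ≤ 0)
    (hfd : 0 ≤ (q - p) 0) {ε : ℝ} (hε : 0 < ε) :
    ∃ v : Fin (n + 1) → ℝ, mink v v < 0 ∧ 0 < v 0 ∧
      linearTimeFunction v q - linearTimeFunction v p ≤ √(-mink (q - p) (q - p)) + ε := by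
  set u := q - p
  set t := √(u 0 ^ 2 + ε ^ 2)
  set v : Fin (n + 1) → ℝ := Fin.cons t (Fin.tail u)
  have ht : t ^ 2 = u 0 ^ 2 + ε ^ 2 := Real.sq_sqrt (by positivity)
  have ht0 : 0 < t := Real.sqrt_pos.mpr (by positivity)
  have hut : u 0 ≤ t := Real.le_sqrt hfd (by positivity) |>.mpr (by nlinarith)
  have hvv : -mink v v = -mink u u + ε ^ 2 := by
    simp only [v, mink_self_eq, Fin.cons_zero, Fin.cons_succ, Fin.tail]
    linarith
  have hvu : -mink v u ≤ -mink v v := by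
    simp only [v, mink_eq_neg_time_add_space, Fin.cons_zero, Fin.cons_succ, Fin.tail]
    nlinarith
  have hN : 0 < √(-mink v v) := Real.sqrt_pos.mpr (by nlinarith)
  refine ⟨v, by nlinarith, ht0, ?_⟩
  calc linearTimeFunction v q - linearTimeFunction v p = -mink v u / √(-mink v v) :=
        linearTimeFunction_sub v p q
    _ ≤ √(-mink v v) :=
        div_le_of_le_mul₀ hN.le hN.le (by rwa [Real.mul_self_sqrt (by nlinarith)])
    _ ≤ √(-mink u u) + ε := by
        rw [hvv, Real.sqrt_le_left (by positivity)]
        nlinarith [Real.sq_sqrt (neg_nonneg.mpr hc), Real.sqrt_nonneg (-mink u u)]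

end

/-- In Minkowski space, for `q − p` future-directed causal, the Lorentzian distance
`d(p,q) = √(−g(q−p,q−p))` equals the infimum of `[f(q)−f(p)]⁺` over steep `C¹`
functions `f`; moreover the infimum is attained up to any `ε > 0` by the linear
functions `f_v(x) = −g(v,x)/√(−g(v,v))` for suitable future-directed timelike `v`. -/
theorem stmt4 (n : ℕ) (p q : Fin (n + 1) → ℝ)
    (hc : mink (q - p) (q - p) ≤ 0) (hfd : 0 ≤ (q - p) 0) :
    Real.sqrt (-(mink (q - p) (q - p))) =
      sInf {r : ℝ | ∃ f : (Fin (n + 1) → ℝ) → ℝ, ContDiff ℝ 1 f ∧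
        (∀ x, mink (mgrad f x) (mgrad f x) ≤ -1 ∧ mgrad f x 0 < 0) ∧
        r = max 0 (f q - f p)} ∧
    ∀ ε > (0 : ℝ), ∃ v : Fin (n + 1) → ℝ, mink v v < 0 ∧ 0 < v 0 ∧
      max 0 ((fun x => -(mink v x) / Real.sqrt (-(mink v v))) q -
             (fun x => -(mink v x) / Real.sqrt (-(mink v v))) p) ≤
        Real.sqrt (-(mink (q - p) (q - p))) + ε := by
  set d := √(-mink (q - p) (q - p))
  have hlin : ∀ ε > 0, ∃ v : Fin (n + 1) → ℝ, mink v v < 0 ∧ 0 < v 0 ∧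
      max 0 (linearTimeFunction v q - linearTimeFunction v p) ≤ d + ε := fun ε hε => by
    obtain ⟨v, hv, hv0, hle⟩ := exists_linearTimeFunction_sub_le hc hfd hε
    exact ⟨v, hv, hv0, max_le (by positivity) hle⟩
  refine ⟨Eq.symm <| csInf_eq_of_forall_ge_of_forall_gt_exists_lt ?_ ?_ ?_, hlin⟩
  · obtain ⟨v, hv, hv0, -⟩ := hlin 1 one_pos
    exact ⟨_, _, contDiff_linearTimeFunction v, isSteep_linearTimeFunction hv hv0, rfl⟩
  · rintro _ ⟨f, hf, hsteep, rfl⟩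
    exact le_max_of_le_right
      (IsSteep.sqrt_neg_mink_le_sub hsteep (hf.differentiable one_ne_zero) hc hfd)
  · intro w hw
    obtain ⟨v, hv, hv0, hle⟩ := hlin ((w - d) / 2) (by linarith)
    exact ⟨_, ⟨_, contDiff_linearTimeFunction v, isSteep_linearTimeFunction hv hv0, rfl⟩,
      by linarith⟩
end
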